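/- Let (A, ·, (ω,ω')) be a symmetric twisted partial H-module algebra. Then for all h,k,m ∈ H: h·ω'(k,m) = Σ ω(h₍₁₎,k₍₁₎m₍₁₎) ω'(h₍₂₎k₍₂₎,m₍₂₎) ω'(h₍₃₎,k₍₃₎). -/

import Mathlib

open TensorProduct

noncomputable section

/-- A twisted partial action `(α, ω)` of a Hopf algebra `H` on a unital
algebra `A` (Definition 2.1 of Alves–Batista–Dokuchaev–Paques).  Sweedler sums
are expressed by quantifying over arbitrary finite representations of the
comultiplication. -/
structure TwistedPartialAction (k H A : Type) [CommRing k]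
    [Ring H] [HopfAlgebra k H] [Ring A] [Algebra k A] where
  act : H →ₗ[k] A →ₗ[k] A
  cocycle : H →ₗ[k] H →ₗ[k] A
  /-- `1_H · a = a` -/
  act_one : ∀ a : A, act 1 a = a
  /-- `h · (ab) = Σ (h₁ · a)(h₂ · b)` -/
  act_mul : ∀ (h : H) (a b : A) (ι : Type) (s : Finset ι) (h1 h2 : ι → H),
    Coalgebra.comul (R := k) h = ∑ i ∈ s, h1 i ⊗ₜ[k] h2 i →
    act h (a * b) = ∑ i ∈ s, act (h1 i) a * act (h2 i) b
  /-- `Σ (h₁ · (l₁ · a)) ω(h₂, l₂) = Σ ω(h₁, l₁)(h₂ l₂ · a)` -/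
  twisted : ∀ (h l : H) (a : A) (ι κ : Type) (s : Finset ι) (t : Finset κ)
    (h1 h2 : ι → H) (l1 l2 : κ → H),
    Coalgebra.comul (R := k) h = ∑ i ∈ s, h1 i ⊗ₜ[k] h2 i →
    Coalgebra.comul (R := k) l = ∑ j ∈ t, l1 j ⊗ₜ[k] l2 j →
    ∑ i ∈ s, ∑ j ∈ t, act (h1 i) (act (l1 j) a) * cocycle (h2 i) (l2 j) =
      ∑ i ∈ s, ∑ j ∈ t, cocycle (h1 i) (l1 j) * act (h2 i * l2 j) a
  /-- `ω(h,l) = Σ ω(h₁, l₁)(h₂ l₂ · 1)` -/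
  cocycle_absorb : ∀ (h l : H) (ι κ : Type) (s : Finset ι) (t : Finset κ)
    (h1 h2 : ι → H) (l1 l2 : κ → H),
    Coalgebra.comul (R := k) h = ∑ i ∈ s, h1 i ⊗ₜ[k] h2 i →
    Coalgebra.comul (R := k) l = ∑ j ∈ t, l1 j ⊗ₜ[k] l2 j →
    cocycle h l = ∑ i ∈ s, ∑ j ∈ t, cocycle (h1 i) (l1 j) * act (h2 i * l2 j) 1

/-- A symmetric twisted partial action (Definition 4.2): the maps
`f₁(h⊗l) = (h·1)ε(l)` and `f₂(h⊗l) = (hl·1)` are central in the convolution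
algebra `Hom(H ⊗ H, A)`, the cocycle `ω` is normalized, satisfies the cocycle
identity, and is invertible in the ideal `⟨f₁ * f₂⟩` with inverse `ω'`
(called `inv` below), and `h·(l·1) = Σ (h₁·1)(h₂l·1)`. -/
structure SymmetricTwistedPartialAction (k H A : Type) [CommRing k]
    [Ring H] [HopfAlgebra k H] [Ring A] [Algebra k A]
    extends TwistedPartialAction k H A where
  inv : H →ₗ[k] H →ₗ[k] A
  f1_central : ∀ (T : H →ₗ[k] H →ₗ[k] A) (h l : H) (ι κ : Type)
    (s : Finset ι) (t : Finset κ) (h1 h2 : ι → H) (l1 l2 : κ → H),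
    Coalgebra.comul (R := k) h = ∑ i ∈ s, h1 i ⊗ₜ[k] h2 i →
    Coalgebra.comul (R := k) l = ∑ j ∈ t, l1 j ⊗ₜ[k] l2 j →
    ∑ i ∈ s, ∑ j ∈ t,
        (Coalgebra.counit (R := k) (l1 j) • act (h1 i) 1) * T (h2 i) (l2 j) =
      ∑ i ∈ s, ∑ j ∈ t,
        T (h1 i) (l1 j) * (Coalgebra.counit (R := k) (l2 j) • act (h2 i) 1)
  f2_central : ∀ (T : H →ₗ[k] H →ₗ[k] A) (h l : H) (ι κ : Type)
    (s : Finset ι) (t : Finset κ) (h1 h2 : ι → H) (l1 l2 : κ → H),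
    Coalgebra.comul (R := k) h = ∑ i ∈ s, h1 i ⊗ₜ[k] h2 i →
    Coalgebra.comul (R := k) l = ∑ j ∈ t, l1 j ⊗ₜ[k] l2 j →
    ∑ i ∈ s, ∑ j ∈ t, act (h1 i * l1 j) 1 * T (h2 i) (l2 j) =
      ∑ i ∈ s, ∑ j ∈ t, T (h1 i) (l1 j) * act (h2 i * l2 j) 1
  norm_right : ∀ h : H, cocycle h 1 = act h 1
  norm_left : ∀ h : H, cocycle 1 h = act h 1
  /-- the cocycle identity (9):
  `Σ (h₁·ω(l₁,m₁)) ω(h₂, l₂m₂) = Σ ω(h₁,l₁) ω(h₂l₂, m)` -/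
  cocycle_id : ∀ (h l m : H) (ι κ ν : Type) (s : Finset ι) (t : Finset κ)
    (r : Finset ν) (h1 h2 : ι → H) (l1 l2 : κ → H) (m1 m2 : ν → H),
    Coalgebra.comul (R := k) h = ∑ i ∈ s, h1 i ⊗ₜ[k] h2 i →
    Coalgebra.comul (R := k) l = ∑ j ∈ t, l1 j ⊗ₜ[k] l2 j →
    Coalgebra.comul (R := k) m = ∑ p ∈ r, m1 p ⊗ₜ[k] m2 p →
    ∑ i ∈ s, ∑ j ∈ t, ∑ p ∈ r,
        act (h1 i) (cocycle (l1 j) (m1 p)) * cocycle (h2 i) (l2 j * m2 p) =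
      ∑ i ∈ s, ∑ j ∈ t, cocycle (h1 i) (l1 j) * cocycle (h2 i * l2 j) m
  /-- `ω' * f₁ = ω'` -/
  inv_absorb_f1 : ∀ (h l : H) (ι κ : Type) (s : Finset ι) (t : Finset κ)
    (h1 h2 : ι → H) (l1 l2 : κ → H),
    Coalgebra.comul (R := k) h = ∑ i ∈ s, h1 i ⊗ₜ[k] h2 i →
    Coalgebra.comul (R := k) l = ∑ j ∈ t, l1 j ⊗ₜ[k] l2 j →
    ∑ i ∈ s, ∑ j ∈ t,
        inv (h1 i) (l1 j) * (Coalgebra.counit (R := k) (l2 j) • act (h2 i) 1) =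
      inv h l
  /-- `ω' * f₂ = ω'` -/
  inv_absorb_f2 : ∀ (h l : H) (ι κ : Type) (s : Finset ι) (t : Finset κ)
    (h1 h2 : ι → H) (l1 l2 : κ → H),
    Coalgebra.comul (R := k) h = ∑ i ∈ s, h1 i ⊗ₜ[k] h2 i →
    Coalgebra.comul (R := k) l = ∑ j ∈ t, l1 j ⊗ₜ[k] l2 j →
    inv h l = ∑ i ∈ s, ∑ j ∈ t, inv (h1 i) (l1 j) * act (h2 i * l2 j) 1
  /-- `ω * ω' = f₁ * f₂` -/
  cocycle_inv : ∀ (h l : H) (ι κ : Type) (s : Finset ι) (t : Finset κ)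
    (h1 h2 : ι → H) (l1 l2 : κ → H),
    Coalgebra.comul (R := k) h = ∑ i ∈ s, h1 i ⊗ₜ[k] h2 i →
    Coalgebra.comul (R := k) l = ∑ j ∈ t, l1 j ⊗ₜ[k] l2 j →
    ∑ i ∈ s, ∑ j ∈ t, cocycle (h1 i) (l1 j) * inv (h2 i) (l2 j) =
      ∑ i ∈ s, act (h1 i) 1 * act (h2 i * l) 1
  /-- `ω' * ω = f₁ * f₂` -/
  inv_cocycle : ∀ (h l : H) (ι κ : Type) (s : Finset ι) (t : Finset κ)
    (h1 h2 : ι → H) (l1 l2 : κ → H),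
    Coalgebra.comul (R := k) h = ∑ i ∈ s, h1 i ⊗ₜ[k] h2 i →
    Coalgebra.comul (R := k) l = ∑ j ∈ t, l1 j ⊗ₜ[k] l2 j →
    ∑ i ∈ s, ∑ j ∈ t, inv (h1 i) (l1 j) * cocycle (h2 i) (l2 j) =
      ∑ i ∈ s, act (h1 i) 1 * act (h2 i * l) 1
  /-- `h · (l · 1) = Σ (h₁ · 1)(h₂ l · 1)` -/
  act_act_one : ∀ (h l : H) (ι : Type) (s : Finset ι) (h1 h2 : ι → H),
    Coalgebra.comul (R := k) h = ∑ i ∈ s, h1 i ⊗ₜ[k] h2 i →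
    act h (act l 1) = ∑ i ∈ s, act (h1 i) 1 * act (h2 i * l) 1

/-!
Everything is computed in the convolution algebras `Hom(H ⊗ H, A)` and `Hom(H ⊗ (H ⊗ H), A)`.
In the first one the axioms say that `f₁` and `f₂` are central, that `ω * f₂ = ω`,
`ω' * f₁ = ω' * f₂ = ω'`, `ω * ω' = ω' * ω = f₁ * f₂`, and that `f₁ * f₂` is `h ⊗ l ↦ h·(l·1)`.
Pulling back along the coalgebra maps `h ⊗ l ⊗ m ↦ h ⊗ lm, hl ⊗ m, ε(m) h ⊗ l` gives
`B = ω(h, lm)`, `C' = ω'(hl, m)`, `D' = ε(m) ω'(h, l)`, and likewise `C`, `D` from `ω`,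
`F = h(lm)·1` from `f₂`, and a central idempotent `E = D * D' = D' * D` from `f₁ * f₂`.
Since `h ⊗ c ↦ h·X(c)` is multiplicative, `U = h·ω'(l, m)` and `W = h·ω(l, m)` satisfy
`U * W = E * F` and `U * E * F = U`, while the cocycle identity is `W * B = D * C`. Hence
`W * B * C' * D' = D * C * C' * D' = D * F * D' = E * F` and
`U = U * W * B * C' * D' = E * F * B * C' * D' = B * C' * D'`, which is the claim evaluated at
`h ⊗ l ⊗ m`. The step `D * F * D' = D * D' * F` uses that `F` commutes with `D'`: the twisting
condition for `a = m·1` gives `E * F * D = D * F`, so `D' * F = D' * E * F * E = D' * D * F * D'`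
`= E * F * D' = F * D'`.
-/

open WithConv LinearMap
open Coalgebra (Repr counit counitCoalgHom sum_counit_smul sum_tmul_counit_eq)
open scoped Coalgebra

section Convolution

variable {k A : Type} [CommRing k] [Ring A] [Algebra k A]

def convComap {C D : Type} [AddCommGroup C] [Module k C] [Coalgebra k C]
    [AddCommGroup D] [Module k D] [Coalgebra k D] (φ : C →ₗc[k] D) :
    WithConv (D →ₗ[k] A) →ₙ* WithConv (C →ₗ[k] A) where
  toFun X := toConv (X.ofConv ∘ₗ φ.toLinearMap)
  map_mul' X Y := WithConv.ext (convMul_comp_coalgHom_distrib X Y φ)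

@[simp] lemma convComap_apply {C D : Type} [AddCommGroup C] [Module k C] [Coalgebra k C]
    [AddCommGroup D] [Module k D] [Coalgebra k D] (φ : C →ₗc[k] D)
    (X : WithConv (D →ₗ[k] A)) (c : C) : convComap φ X c = X (φ c) := rfl

variable {M N : Type} [AddCommGroup M] [Module k M] [AddCommGroup N] [Module k N]

lemma convExt₂ {X Y : WithConv (M ⊗[k] N →ₗ[k] A)} (h : ∀ a b, X (a ⊗ₜ b) = Y (a ⊗ₜ b)) :
    X = Y :=
  WithConv.ext (TensorProduct.ext' h)

variable [Coalgebra k M] [Coalgebra k N]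

lemma Coalgebra.sum_counit_right_smul {c : M} {ι : Type} (ℛc : Repr k c ι) :
    ∑ i ∈ ℛc.index, counit (R := k) (ℛc.right i) • ℛc.left i = c := by
  simpa only [map_sum, _root_.TensorProduct.rid_tmul, one_smul] using
    congr(_root_.TensorProduct.rid k M $(sum_tmul_counit_eq ℛc))

lemma convMul_tmul_apply (X Y : WithConv (M ⊗[k] N →ₗ[k] A)) {a : M} {b : N} {ι κ : Type}
    (ℛa : Repr k a ι) (ℛb : Repr k b κ) :
    (X * Y) (a ⊗ₜ b) = ∑ i ∈ ℛa.index, ∑ j ∈ ℛb.index,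
      X (ℛa.left i ⊗ₜ ℛb.left j) * Y (ℛa.right i ⊗ₜ ℛb.right j) := by
  simp only [convMul_apply, TensorProduct.comul_tmul, ← ℛa.eq, ← ℛb.eq, TensorProduct.tmul_sum,
    TensorProduct.sum_tmul, map_sum, TensorProduct.AlgebraTensorModule.tensorTensorTensorComm_tmul,
    TensorProduct.map_tmul, mul'_apply]
  exact Finset.sum_comm

end Convolution

section TripleTensor

variable {k A : Type} [CommRing k] [Ring A] [Algebra k A]
  {M N L : Type} [AddCommGroup M] [Module k M] [AddCommGroup N] [Module k N]
  [AddCommGroup L] [Module k L]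

lemma convExt₃ {X Y : WithConv (M ⊗[k] (N ⊗[k] L) →ₗ[k] A)}
    (h : ∀ a b c, X (a ⊗ₜ (b ⊗ₜ c)) = Y (a ⊗ₜ (b ⊗ₜ c))) : X = Y :=
  WithConv.ext (TensorProduct.ext_threefold' h)

def sliceRight (c : L) (Y : WithConv (M ⊗[k] (N ⊗[k] L) →ₗ[k] A)) :
    WithConv (M ⊗[k] N →ₗ[k] A) :=
  toConv (Y.ofConv ∘ₗ lTensor M ((TensorProduct.mk k N L).flip c))

@[simp] lemma sliceRight_apply_tmul (c : L) (Y : WithConv (M ⊗[k] (N ⊗[k] L) →ₗ[k] A))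
    (a : M) (b : N) : sliceRight c Y (a ⊗ₜ b) = Y (a ⊗ₜ (b ⊗ₜ c)) := rfl

variable [Coalgebra k M] [Coalgebra k N] [Coalgebra k L]

lemma convMul_tmul_tmul_apply (X Y : WithConv (M ⊗[k] (N ⊗[k] L) →ₗ[k] A)) {a : M} {b : N}
    {c : L} {ι κ ν : Type} (ℛa : Repr k a ι) (ℛb : Repr k b κ) (ℛc : Repr k c ν) :
    (X * Y) (a ⊗ₜ (b ⊗ₜ c)) = ∑ i ∈ ℛa.index, ∑ j ∈ ℛb.index, ∑ p ∈ ℛc.index,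
      X (ℛa.left i ⊗ₜ (ℛb.left j ⊗ₜ ℛc.left p)) *
        Y (ℛa.right i ⊗ₜ (ℛb.right j ⊗ₜ ℛc.right p)) := by
  simp only [convMul_apply, TensorProduct.comul_tmul, ← ℛa.eq, ← ℛb.eq, ← ℛc.eq,
    TensorProduct.tmul_sum, TensorProduct.sum_tmul, map_sum,
    TensorProduct.AlgebraTensorModule.tensorTensorTensorComm_tmul, TensorProduct.map_tmul,
    mul'_apply]
  rw [Finset.sum_comm]
  simp_rw [Finset.sum_comm (s := ℛc.index) (t := ℛa.index)]
  exact Finset.sum_comm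

def counitRight : M ⊗[k] (N ⊗[k] L) →ₗc[k] M ⊗[k] N :=
  CoalgHom.lTensor M ((Coalgebra.TensorProduct.rid k k N : N ⊗[k] k →ₗc[k] N).comp
    (CoalgHom.lTensor N (counitCoalgHom k L)))

@[simp] lemma counitRight_tmul (a : M) (b : N) (c : L) :
    counitRight (a ⊗ₜ[k] (b ⊗ₜ[k] c)) = counit (R := k) c • (a ⊗ₜ[k] b) := by
  simp [counitRight, TensorProduct.tmul_smul]

lemma convComap_counitRight_mul_apply (X : WithConv (M ⊗[k] N →ₗ[k] A))
    (Y : WithConv (M ⊗[k] (N ⊗[k] L) →ₗ[k] A)) (a : M) (b : N) (c : L) :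
    (convComap (counitRight (L := L)) X * Y) (a ⊗ₜ (b ⊗ₜ c)) =
      (X * sliceRight c Y) (a ⊗ₜ b) := by
  rw [convMul_tmul_tmul_apply _ _ (ℛ k a) (ℛ k b) (ℛ k c),
    convMul_tmul_apply _ _ (ℛ k a) (ℛ k b)]
  conv_rhs => rw [← sum_counit_smul (ℛ k c)]
  simp [TensorProduct.tmul_sum, map_sum, Finset.mul_sum]

lemma mul_convComap_counitRight_apply (X : WithConv (M ⊗[k] N →ₗ[k] A))
    (Y : WithConv (M ⊗[k] (N ⊗[k] L) →ₗ[k] A)) (a : M) (b : N) (c : L) :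
    (Y * convComap (counitRight (L := L)) X) (a ⊗ₜ (b ⊗ₜ c)) =
      (sliceRight c Y * X) (a ⊗ₜ b) := by
  rw [convMul_tmul_tmul_apply _ _ (ℛ k a) (ℛ k b) (ℛ k c),
    convMul_tmul_apply _ _ (ℛ k a) (ℛ k b)]
  conv_rhs => rw [← Coalgebra.sum_counit_right_smul (ℛ k c)]
  simp [TensorProduct.tmul_sum, map_sum, Finset.sum_mul]

lemma commute_convComap_counitRight {X : WithConv (M ⊗[k] N →ₗ[k] A)}
    (hX : ∀ Y, Commute X Y) (Y : WithConv (M ⊗[k] (N ⊗[k] L) →ₗ[k] A)) :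
    Commute (convComap counitRight X) Y :=
  convExt₃ fun a b c => by
    rw [convComap_counitRight_mul_apply, mul_convComap_counitRight_apply, (hX _).eq]

end TripleTensor

section Bialgebra

variable (k H : Type) [CommRing k] [Ring H] [Bialgebra k H]

def idMul : H ⊗[k] (H ⊗[k] H) →ₗc[k] H ⊗[k] H := CoalgHom.lTensor H (Bialgebra.mulCoalgHom k H)

def mulId : H ⊗[k] (H ⊗[k] H) →ₗc[k] H ⊗[k] H :=
  (CoalgHom.rTensor H (Bialgebra.mulCoalgHom k H)).comp
    (Coalgebra.TensorProduct.assoc k k H H H).symm.toCoalgHom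

variable {k H}

@[simp] lemma idMul_tmul (h l m : H) : idMul k H (h ⊗ₜ (l ⊗ₜ m)) = h ⊗ₜ (l * m) := by
  simp [idMul]

@[simp] lemma mulId_tmul (h l m : H) : mulId k H (h ⊗ₜ (l ⊗ₜ m)) = (h * l) ⊗ₜ m := by
  simp [mulId]

end Bialgebra

namespace TwistedPartialAction

variable {k H A : Type} [CommRing k] [Ring H] [HopfAlgebra k H] [Ring A] [Algebra k A]
  (P : TwistedPartialAction k H A)

def unitMap : H →ₗ[k] A := P.act.flip 1

@[simp] lemma unitMap_apply (h : H) : P.unitMap h = P.act h 1 := rfl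

def liftAct {C : Type} [AddCommGroup C] [Module k C] [Coalgebra k C] :
    WithConv (C →ₗ[k] A) →ₙ* WithConv (H ⊗[k] C →ₗ[k] A) where
  toFun X := toConv (TensorProduct.lift (P.act.compl₂ X.ofConv))
  map_mul' X Y := convExt₂ fun h c => by
    rw [convMul_tmul_apply _ _ (ℛ k h) (ℛ k c), Finset.sum_comm]
    simp only [TensorProduct.lift.tmul, compl₂_apply, (ℛ k c).convMul_apply, map_sum]
    exact Finset.sum_congr rfl fun j _ => P.act_mul _ _ _ _ _ _ _ (ℛ k h).eq.symm

@[simp] lemma liftAct_apply_tmul {C : Type} [AddCommGroup C] [Module k C] [Coalgebra k C]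
    (X : WithConv (C →ₗ[k] A)) (h : H) (c : C) : P.liftAct X (h ⊗ₜ c) = P.act h (X c) := rfl

def ω : WithConv (H ⊗[k] H →ₗ[k] A) := toConv (TensorProduct.lift P.cocycle)

@[simp] lemma ω_apply_tmul (h l : H) : P.ω (h ⊗ₜ l) = P.cocycle h l := rfl

def f₁ : WithConv (H ⊗[k] H →ₗ[k] A) :=
  toConv (P.unitMap ∘ₗ (TensorProduct.rid k H).toLinearMap ∘ₗ lTensor H counit)

@[simp] lemma f₁_apply_tmul (h l : H) : P.f₁ (h ⊗ₜ l) = counit (R := k) l • P.act h 1 := by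
  simp [f₁]

def f₂ : WithConv (H ⊗[k] H →ₗ[k] A) := toConv (P.unitMap ∘ₗ mul' k H)

@[simp] lemma f₂_apply_tmul (h l : H) : P.f₂ (h ⊗ₜ l) = P.act (h * l) 1 := by
  simp [f₂]

lemma liftAct_act_flip_mul_ω (a : A) :
    P.liftAct (toConv (P.act.flip a)) * P.ω = P.ω * toConv (P.act.flip a ∘ₗ mul' k H) :=
  convExt₂ fun h l => by
    rw [convMul_tmul_apply _ _ (ℛ k h) (ℛ k l), convMul_tmul_apply _ _ (ℛ k h) (ℛ k l)]
    simpa using P.twisted h l a _ _ _ _ _ _ _ _ (ℛ k h).eq.symm (ℛ k l).eq.symm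

lemma ω_mul_f₂ : P.ω * P.f₂ = P.ω :=
  convExt₂ fun h l => by
    rw [convMul_tmul_apply _ _ (ℛ k h) (ℛ k l)]
    simpa using (P.cocycle_absorb h l _ _ _ _ _ _ _ _ (ℛ k h).eq.symm (ℛ k l).eq.symm).symm

end TwistedPartialAction

namespace SymmetricTwistedPartialAction

open TwistedPartialAction

variable {k H A : Type} [CommRing k] [Ring H] [HopfAlgebra k H] [Ring A] [Algebra k A]
  (P : SymmetricTwistedPartialAction k H A)

def ω' : WithConv (H ⊗[k] H →ₗ[k] A) := toConv (TensorProduct.lift P.inv)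

@[simp] lemma ω'_apply_tmul (h l : H) : P.ω' (h ⊗ₜ l) = P.inv h l := rfl

lemma commute_f₁ (X : WithConv (H ⊗[k] H →ₗ[k] A)) : Commute P.f₁ X :=
  convExt₂ fun h l => by
    rw [convMul_tmul_apply _ _ (ℛ k h) (ℛ k l), convMul_tmul_apply _ _ (ℛ k h) (ℛ k l)]
    simpa using P.f1_central (TensorProduct.curry X.ofConv) h l _ _ _ _ _ _ _ _
      (ℛ k h).eq.symm (ℛ k l).eq.symm

lemma commute_f₂ (X : WithConv (H ⊗[k] H →ₗ[k] A)) : Commute P.f₂ X :=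
  convExt₂ fun h l => by
    rw [convMul_tmul_apply _ _ (ℛ k h) (ℛ k l), convMul_tmul_apply _ _ (ℛ k h) (ℛ k l)]
    simpa using P.f2_central (TensorProduct.curry X.ofConv) h l _ _ _ _ _ _ _ _
      (ℛ k h).eq.symm (ℛ k l).eq.symm

lemma commute_f₁_mul_f₂ (X : WithConv (H ⊗[k] H →ₗ[k] A)) : Commute (P.f₁ * P.f₂) X :=
  (P.commute_f₁ X).mul_left (P.commute_f₂ X)

lemma ω'_mul_f₁ : P.ω' * P.f₁ = P.ω' :=
  convExt₂ fun h l => by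
    rw [convMul_tmul_apply _ _ (ℛ k h) (ℛ k l)]
    simpa using P.inv_absorb_f1 h l _ _ _ _ _ _ _ _ (ℛ k h).eq.symm (ℛ k l).eq.symm

lemma ω'_mul_f₂ : P.ω' * P.f₂ = P.ω' :=
  convExt₂ fun h l => by
    rw [convMul_tmul_apply _ _ (ℛ k h) (ℛ k l)]
    simpa using (P.inv_absorb_f2 h l _ _ _ _ _ _ _ _ (ℛ k h).eq.symm (ℛ k l).eq.symm).symm

lemma liftAct_unitMap : P.liftAct (toConv P.unitMap) = P.f₁ * P.f₂ :=
  convExt₂ fun h l => by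
    rw [convMul_tmul_apply _ _ (ℛ k h) (ℛ k l), liftAct_apply_tmul, unitMap_apply,
      P.act_act_one h l _ _ _ _ (ℛ k h).eq.symm]
    conv_lhs => rw [← sum_counit_smul (ℛ k l)]
    simp [Finset.mul_sum, map_sum]

lemma ω_mul_ω' : P.ω * P.ω' = P.f₁ * P.f₂ :=
  convExt₂ fun h l => by
    rw [convMul_tmul_apply _ _ (ℛ k h) (ℛ k l), ← P.liftAct_unitMap, liftAct_apply_tmul,
      unitMap_apply, P.act_act_one h l _ _ _ _ (ℛ k h).eq.symm]
    exact P.cocycle_inv h l _ _ _ _ _ _ _ _ (ℛ k h).eq.symm (ℛ k l).eq.symm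

lemma ω'_mul_ω : P.ω' * P.ω = P.f₁ * P.f₂ :=
  convExt₂ fun h l => by
    rw [convMul_tmul_apply _ _ (ℛ k h) (ℛ k l), ← P.liftAct_unitMap, liftAct_apply_tmul,
      unitMap_apply, P.act_act_one h l _ _ _ _ (ℛ k h).eq.symm]
    exact P.inv_cocycle h l _ _ _ _ _ _ _ _ (ℛ k h).eq.symm (ℛ k l).eq.symm

lemma f₁_mul_f₂_apply_tmul (h l : H) : (P.f₁ * P.f₂) (h ⊗ₜ l) = P.act h (P.act l 1) := by
  rw [← liftAct_unitMap]; rfl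

lemma f₁_mul_f₂_mul_ω : P.f₁ * P.f₂ * P.ω = P.ω := by
  rw [← liftAct_unitMap]
  exact (P.liftAct_act_flip_mul_ω 1).trans P.ω_mul_f₂

lemma ω'_mul_f₁_mul_f₂ : P.ω' * (P.f₁ * P.f₂) = P.ω' := by
  rw [← mul_assoc, ω'_mul_f₁, ω'_mul_f₂]

lemma f₁_mul_f₂_mul_f₁ : P.f₁ * P.f₂ * P.f₁ = P.f₁ * P.f₂ := by
  rw [← ω_mul_ω', mul_assoc, ω'_mul_f₁]

lemma isIdempotentElem_f₁_mul_f₂ : IsIdempotentElem (P.f₁ * P.f₂) := by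
  unfold IsIdempotentElem
  nth_rw 2 [← P.ω_mul_ω']
  rw [← mul_assoc, f₁_mul_f₂_mul_ω, ω_mul_ω']

local notation "counitRight₃" => counitRight (k := k) (M := H) (N := H) (L := H)

lemma convComap_idMul_f₁ : convComap (idMul k H) P.f₁ = convComap counitRight₃ P.f₁ :=
  convExt₃ fun h l m => by simp [Bialgebra.counit_mul, smul_smul, mul_comm]

lemma convComap_mulId_f₁ : convComap (mulId k H) P.f₁ = convComap counitRight₃ P.f₂ :=
  convExt₃ fun h l m => by simp

lemma convComap_mulId_f₂ : convComap (mulId k H) P.f₂ = convComap (idMul k H) P.f₂ :=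
  convExt₃ fun h l m => by simp [mul_assoc]

lemma liftAct_f₁_mul_f₂ : P.liftAct (P.f₁ * P.f₂) =
    convComap counitRight₃ (P.f₁ * P.f₂) * convComap (idMul k H) P.f₂ := by
  have h₁ : P.liftAct P.f₁ = convComap counitRight₃ (P.f₁ * P.f₂) :=
    convExt₃ fun h l m => by
      simp only [liftAct_apply_tmul, convComap_apply, counitRight_tmul, map_smul,
        f₁_apply_tmul, f₁_mul_f₂_apply_tmul]
  have h₂ : P.liftAct P.f₂ = convComap (idMul k H) (P.f₁ * P.f₂) :=
    convExt₃ fun h l m => by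
      simp only [liftAct_apply_tmul, convComap_apply, idMul_tmul, f₂_apply_tmul,
        f₁_mul_f₂_apply_tmul]
  rw [map_mul, h₁, h₂, map_mul (convComap (idMul k H)), convComap_idMul_f₁, ← mul_assoc,
    ← map_mul, f₁_mul_f₂_mul_f₁]

lemma liftAct_f₁_mul_f₂_mul_convComap_ω :
    P.liftAct (P.f₁ * P.f₂) * convComap counitRight₃ P.ω =
      convComap counitRight₃ P.ω * convComap (mulId k H) (P.f₁ * P.f₂) :=
  convExt₃ fun h l m => by
    rw [mul_convComap_counitRight_apply, convComap_counitRight_mul_apply]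
    have hl : sliceRight m (P.liftAct (P.f₁ * P.f₂)) =
        P.liftAct (toConv (P.act.flip (P.act m 1))) :=
      convExt₂ fun a b => by
        simp only [sliceRight_apply_tmul, liftAct_apply_tmul, f₁_mul_f₂_apply_tmul]; rfl
    have hr : sliceRight m (convComap (mulId k H) (P.f₁ * P.f₂)) =
        toConv (P.act.flip (P.act m 1) ∘ₗ mul' k H) :=
      convExt₂ fun a b => by
        simp only [sliceRight_apply_tmul, convComap_apply, mulId_tmul, f₁_mul_f₂_apply_tmul]; rfl
    rw [hl, hr, liftAct_act_flip_mul_ω]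

lemma liftAct_ω_mul_convComap_ω :
    P.liftAct P.ω * convComap (idMul k H) P.ω =
      convComap counitRight₃ P.ω * convComap (mulId k H) P.ω :=
  convExt₃ fun h l m => by
    rw [convComap_counitRight_mul_apply, convMul_tmul_tmul_apply _ _ (ℛ k h) (ℛ k l) (ℛ k m),
      convMul_tmul_apply _ _ (ℛ k h) (ℛ k l)]
    simpa using P.cocycle_id h l m _ _ _ _ _ _ _ _ _ _ _ _ (ℛ k h).eq.symm (ℛ k l).eq.symm
      (ℛ k m).eq.symm

lemma commute_convComap_f₁_mul_f₂ (Y : WithConv (H ⊗[k] (H ⊗[k] H) →ₗ[k] A)) :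
    Commute (convComap counitRight₃ (P.f₁ * P.f₂)) Y :=
  commute_convComap_counitRight P.commute_f₁_mul_f₂ Y

lemma commute_convComap_f₂_ω' :
    Commute (convComap (idMul k H) P.f₂) (convComap counitRight₃ P.ω') := by
  set F := convComap (idMul k H) P.f₂
  set D := convComap counitRight₃ P.ω
  set D' := convComap counitRight₃ P.ω'
  set E := convComap counitRight₃ (P.f₁ * P.f₂)
  have hEF : P.liftAct (P.f₁ * P.f₂) = E * F := P.liftAct_f₁_mul_f₂
  have hDD' : D * D' = E := by rw [← map_mul, ω_mul_ω']
  have hD'D : D' * D = E := by rw [← map_mul, ω'_mul_ω]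
  have hD'E : D' * E = D' := by rw [← map_mul, ω'_mul_f₁_mul_f₂]
  have hED' : E * D' = D' := by rw [(P.commute_convComap_f₁_mul_f₂ D').eq, hD'E]
  have hEFD : E * F * D = D * F := by
    rw [← hEF, liftAct_f₁_mul_f₂_mul_convComap_ω, map_mul, convComap_mulId_f₁,
      convComap_mulId_f₂, ← mul_assoc, ← map_mul, ω_mul_f₂]
  have hEFE : E * F * E = E * F := by
    rw [mul_assoc, ← (P.commute_convComap_f₁_mul_f₂ F).eq, ← mul_assoc, ← map_mul,
      P.isIdempotentElem_f₁_mul_f₂.eq]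
  calc F * D' = F * (E * D') := by rw [hED']
    _ = D' * D * F * D' := by rw [hD'D, ← mul_assoc, (P.commute_convComap_f₁_mul_f₂ F).eq]
    _ = D' * (E * F * D * D') := by rw [hEFD]; simp only [mul_assoc]
    _ = D' * (E * F * E) := by rw [← hDD']; simp only [mul_assoc]
    _ = D' * F := by rw [hEFE, ← mul_assoc, hD'E]

theorem liftAct_ω' : P.liftAct P.ω' = convComap (idMul k H) P.ω *
    convComap (mulId k H) P.ω' * convComap counitRight₃ P.ω' := by
  have hWB := P.liftAct_ω_mul_convComap_ω
  have hFD' := P.commute_convComap_f₂_ω'.eq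
  have hEF := P.liftAct_f₁_mul_f₂
  have hE := P.commute_convComap_f₁_mul_f₂
  set B := convComap (idMul k H) P.ω
  set C := convComap (mulId k H) P.ω
  set C' := convComap (mulId k H) P.ω'
  set D := convComap counitRight₃ P.ω
  set D' := convComap counitRight₃ P.ω'
  set E := convComap counitRight₃ (P.f₁ * P.f₂)
  set F := convComap (idMul k H) P.f₂
  set R := B * C' * D'
  have hUW : P.liftAct P.ω' * P.liftAct P.ω = E * F := by rw [← map_mul, ω'_mul_ω, hEF]
  have hUEF : P.liftAct P.ω' * (E * F) = P.liftAct P.ω' := by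
    rw [← hEF, ← map_mul, ω'_mul_f₁_mul_f₂]
  have hCC' : C * C' = convComap counitRight₃ P.f₂ * F := by
    rw [← map_mul, ω_mul_ω', map_mul, convComap_mulId_f₁, convComap_mulId_f₂]
  have hWR : P.liftAct P.ω * R = E * F :=
    calc P.liftAct P.ω * R = D * (C * C') * D' := by simp only [R, ← mul_assoc, hWB]
      _ = D * D' * F := by
          rw [hCC', ← mul_assoc, ← map_mul, ω_mul_f₂, mul_assoc, hFD', ← mul_assoc]
      _ = E * F := by rw [← map_mul, ω_mul_ω']
  have hFR : F * R = R := by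
    simp only [R, ← mul_assoc]; rw [← map_mul, (P.commute_f₂ _).eq, ω_mul_f₂]
  have hRE : R * E = R := by rw [mul_assoc, ← map_mul, ω'_mul_f₁_mul_f₂]
  calc P.liftAct P.ω' = P.liftAct P.ω' * (P.liftAct P.ω * R) := by rw [hWR, hUEF]
    _ = E * R := by rw [← mul_assoc, hUW, mul_assoc, hFR]
    _ = R := by rw [(hE R).eq, hRE]

lemma convComap_ω'_mul_convComap_ω'_apply {x y : H} {ι κ : Type} (ℛx : Repr k x ι)
    (ℛy : Repr k y κ) (z : H) :
    (convComap (mulId k H) P.ω' * convComap counitRight₃ P.ω') (x ⊗ₜ (y ⊗ₜ z)) =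
      ∑ i ∈ ℛx.index, ∑ j ∈ ℛy.index,
        P.inv (ℛx.left i * ℛy.left j) z * P.inv (ℛx.right i) (ℛy.right j) := by
  rw [mul_convComap_counitRight_apply, convMul_tmul_apply _ _ ℛx ℛy]
  rfl

end SymmetricTwistedPartialAction

theorem symm_act_inv
    {k H A : Type} [CommRing k] [Ring H] [HopfAlgebra k H]
    [Ring A] [Algebra k A] (P : SymmetricTwistedPartialAction k H A) :
    ∀ (h l m : H) (ι ι' κ κ' ν : Type) (s : Finset ι)
      (s' : ι → Finset ι') (t : Finset κ) (t' : κ → Finset κ') (r : Finset ν)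
      (h1 h2 : ι → H) (h21 h22 : ι → ι' → H)
      (l1 l2 : κ → H) (l21 l22 : κ → κ' → H) (m1 m2 : ν → H),
      Coalgebra.comul (R := k) h = ∑ i ∈ s, h1 i ⊗ₜ[k] h2 i →
      (∀ i ∈ s, Coalgebra.comul (R := k) (h2 i) =
        ∑ j ∈ s' i, h21 i j ⊗ₜ[k] h22 i j) →
      Coalgebra.comul (R := k) l = ∑ p ∈ t, l1 p ⊗ₜ[k] l2 p →
      (∀ p ∈ t, Coalgebra.comul (R := k) (l2 p) =
        ∑ q ∈ t' p, l21 p q ⊗ₜ[k] l22 p q) →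
      Coalgebra.comul (R := k) m = ∑ n ∈ r, m1 n ⊗ₜ[k] m2 n →
      P.act h (P.inv l m) =
        ∑ i ∈ s, ∑ j ∈ s' i, ∑ p ∈ t, ∑ q ∈ t' p, ∑ n ∈ r,
          P.cocycle (h1 i) (l1 p * m1 n) * P.inv (h21 i j * l21 p q) (m2 n) *
            P.inv (h22 i j) (l22 p q) := by
  intro h l m ι ι' κ κ' ν s s' t t' r h1 h2 h21 h22 l1 l2 l21 l22 m1 m2 hh hh2 hl hl2 hm
  change P.liftAct P.ω' (h ⊗ₜ (l ⊗ₜ m)) = _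
  rw [P.liftAct_ω', mul_assoc, convMul_tmul_tmul_apply _ _ ⟨s, h1, h2, hh.symm⟩
    ⟨t, l1, l2, hl.symm⟩ ⟨r, m1, m2, hm.symm⟩]
  refine Finset.sum_congr rfl fun i hi => ?_
  rw [Finset.sum_comm (s := s' i)]
  refine Finset.sum_congr rfl fun p hp => ?_
  simp only [P.convComap_ω'_mul_convComap_ω'_apply ⟨s' i, h21 i, h22 i, (hh2 i hi).symm⟩
    ⟨t' p, l21 p, l22 p, (hl2 p hp).symm⟩, Finset.mul_sum, convComap_apply, idMul_tmul,
    TwistedPartialAction.ω_apply_tmul, mul_assoc]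
  rw [Finset.sum_comm]
  exact Finset.sum_congr rfl fun j _ => Finset.sum_comm
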